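/- arXiv:1201.1102 — 3 statements merged into one kernel-verified Lean document; each statement's English description precedes it below -/
import Mathlib

section
/- The orbit closures of the five trivector normal forms form a chain: e₁₂₃ lies in the closure of the GL₆-orbit of e₁₂₃ + e₁₄₅; e₁₂₃ + e₁₄₅ lies in the closure of the GL₆-orbit of e₁₂₃ + e₁₄₅ + e₂₄₆; and e₁₂₃ + e₁₄₅ + e₂₄₆ lies in the closure of the GL₆-orbit of e₁₂₃ + e₄₅₆ (closures taken in the standard topology of ⋀³ℂ⁶ as a finite-dimensional complex vector space). -/
open ExteriorAlgebra

/-- The standard topology on the (finite-dimensional) complex vector space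
`ExteriorAlgebra ℂ ℂ⁶`, realized as the weak topology induced by all linear functionals
(which agrees with the standard topology on a finite-dimensional complex vector space). -/
noncomputable instance : TopologicalSpace (ExteriorAlgebra ℂ (Fin 6 → ℂ)) :=
  ⨅ f : ExteriorAlgebra ℂ (Fin 6 → ℂ) →ₗ[ℂ] ℂ, TopologicalSpace.induced f inferInstance

/-- The `i`-th standard basis vector of `ℂ⁶`. -/
noncomputable def stdVec (i : Fin 6) : Fin 6 → ℂ := Pi.single i 1

/-- The trivector `eᵢ ∧ eⱼ ∧ e_k ∈ ⋀³ℂ⁶` (viewed inside the exterior algebra). -/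
noncomputable def wedge3 (i j k : Fin 6) : ExteriorAlgebra ℂ (Fin 6 → ℂ) :=
  ι ℂ (stdVec i) * ι ℂ (stdVec j) * ι ℂ (stdVec k)

/-- Two elements of the exterior algebra of `ℂ⁶` are `GL₆(ℂ)`-equivalent if some linear
automorphism `g` of `ℂ⁶` carries the first to the second via the induced (functorial) map;
on `⋀³ℂ⁶` this is the action `g · w = (⋀³g)(w)`. -/
def GLEquiv3 (v w : ExteriorAlgebra ℂ (Fin 6 → ℂ)) : Prop :=
  ∃ g : (Fin 6 → ℂ) ≃ₗ[ℂ] (Fin 6 → ℂ), ExteriorAlgebra.map g.toLinearMap v = w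

/-! ### Auxiliary material -/

namespace TrivectorAux

variable {α : Type*}
lemma ev6_0 (x : α) (u : Fin 5 → α) : Matrix.vecCons x u 0 = x := rfl
lemma evm6_0 (x : α) (u : Fin 5 → α) (h : 0 < 6) : Matrix.vecCons x u ⟨0, h⟩ = x := rfl
lemma ev6_1 (x : α) (u : Fin 5 → α) : Matrix.vecCons x u 1 = u 0 := rfl
lemma evm6_1 (x : α) (u : Fin 5 → α) (h : 1 < 6) : Matrix.vecCons x u ⟨1, h⟩ = u ⟨0, by omega⟩ := rfl
lemma ev6_2 (x : α) (u : Fin 5 → α) : Matrix.vecCons x u 2 = u 1 := rfl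
lemma evm6_2 (x : α) (u : Fin 5 → α) (h : 2 < 6) : Matrix.vecCons x u ⟨2, h⟩ = u ⟨1, by omega⟩ := rfl
lemma ev6_3 (x : α) (u : Fin 5 → α) : Matrix.vecCons x u 3 = u 2 := rfl
lemma evm6_3 (x : α) (u : Fin 5 → α) (h : 3 < 6) : Matrix.vecCons x u ⟨3, h⟩ = u ⟨2, by omega⟩ := rfl
lemma ev6_4 (x : α) (u : Fin 5 → α) : Matrix.vecCons x u 4 = u 3 := rfl
lemma evm6_4 (x : α) (u : Fin 5 → α) (h : 4 < 6) : Matrix.vecCons x u ⟨4, h⟩ = u ⟨3, by omega⟩ := rfl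
lemma ev6_5 (x : α) (u : Fin 5 → α) : Matrix.vecCons x u 5 = u 4 := rfl
lemma evm6_5 (x : α) (u : Fin 5 → α) (h : 5 < 6) : Matrix.vecCons x u ⟨5, h⟩ = u ⟨4, by omega⟩ := rfl
lemma ev5_0 (x : α) (u : Fin 4 → α) : Matrix.vecCons x u 0 = x := rfl
lemma evm5_0 (x : α) (u : Fin 4 → α) (h : 0 < 5) : Matrix.vecCons x u ⟨0, h⟩ = x := rfl
lemma ev5_1 (x : α) (u : Fin 4 → α) : Matrix.vecCons x u 1 = u 0 := rfl
lemma evm5_1 (x : α) (u : Fin 4 → α) (h : 1 < 5) : Matrix.vecCons x u ⟨1, h⟩ = u ⟨0, by omega⟩ := rfl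
lemma ev5_2 (x : α) (u : Fin 4 → α) : Matrix.vecCons x u 2 = u 1 := rfl
lemma evm5_2 (x : α) (u : Fin 4 → α) (h : 2 < 5) : Matrix.vecCons x u ⟨2, h⟩ = u ⟨1, by omega⟩ := rfl
lemma ev5_3 (x : α) (u : Fin 4 → α) : Matrix.vecCons x u 3 = u 2 := rfl
lemma evm5_3 (x : α) (u : Fin 4 → α) (h : 3 < 5) : Matrix.vecCons x u ⟨3, h⟩ = u ⟨2, by omega⟩ := rfl
lemma ev5_4 (x : α) (u : Fin 4 → α) : Matrix.vecCons x u 4 = u 3 := rfl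
lemma evm5_4 (x : α) (u : Fin 4 → α) (h : 4 < 5) : Matrix.vecCons x u ⟨4, h⟩ = u ⟨3, by omega⟩ := rfl
lemma ev4_0 (x : α) (u : Fin 3 → α) : Matrix.vecCons x u 0 = x := rfl
lemma evm4_0 (x : α) (u : Fin 3 → α) (h : 0 < 4) : Matrix.vecCons x u ⟨0, h⟩ = x := rfl
lemma ev4_1 (x : α) (u : Fin 3 → α) : Matrix.vecCons x u 1 = u 0 := rfl
lemma evm4_1 (x : α) (u : Fin 3 → α) (h : 1 < 4) : Matrix.vecCons x u ⟨1, h⟩ = u ⟨0, by omega⟩ := rfl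
lemma ev4_2 (x : α) (u : Fin 3 → α) : Matrix.vecCons x u 2 = u 1 := rfl
lemma evm4_2 (x : α) (u : Fin 3 → α) (h : 2 < 4) : Matrix.vecCons x u ⟨2, h⟩ = u ⟨1, by omega⟩ := rfl
lemma ev4_3 (x : α) (u : Fin 3 → α) : Matrix.vecCons x u 3 = u 2 := rfl
lemma evm4_3 (x : α) (u : Fin 3 → α) (h : 3 < 4) : Matrix.vecCons x u ⟨3, h⟩ = u ⟨2, by omega⟩ := rfl
lemma ev3_0 (x : α) (u : Fin 2 → α) : Matrix.vecCons x u 0 = x := rfl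
lemma evm3_0 (x : α) (u : Fin 2 → α) (h : 0 < 3) : Matrix.vecCons x u ⟨0, h⟩ = x := rfl
lemma ev3_1 (x : α) (u : Fin 2 → α) : Matrix.vecCons x u 1 = u 0 := rfl
lemma evm3_1 (x : α) (u : Fin 2 → α) (h : 1 < 3) : Matrix.vecCons x u ⟨1, h⟩ = u ⟨0, by omega⟩ := rfl
lemma ev3_2 (x : α) (u : Fin 2 → α) : Matrix.vecCons x u 2 = u 1 := rfl
lemma evm3_2 (x : α) (u : Fin 2 → α) (h : 2 < 3) : Matrix.vecCons x u ⟨2, h⟩ = u ⟨1, by omega⟩ := rfl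
lemma ev2_0 (x : α) (u : Fin 1 → α) : Matrix.vecCons x u 0 = x := rfl
lemma evm2_0 (x : α) (u : Fin 1 → α) (h : 0 < 2) : Matrix.vecCons x u ⟨0, h⟩ = x := rfl
lemma ev2_1 (x : α) (u : Fin 1 → α) : Matrix.vecCons x u 1 = u 0 := rfl
lemma evm2_1 (x : α) (u : Fin 1 → α) (h : 1 < 2) : Matrix.vecCons x u ⟨1, h⟩ = u ⟨0, by omega⟩ := rfl
lemma ev1_0 (x : α) (u : Fin 0 → α) : Matrix.vecCons x u 0 = x := rfl
lemma evm1_0 (x : α) (u : Fin 0 → α) (h : 0 < 1) : Matrix.vecCons x u ⟨0, h⟩ = x := rfl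
end TrivectorAux
namespace TrivectorAux

abbrev V := Fin 6 → ℂ
abbrev E := ExteriorAlgebra ℂ (Fin 6 → ℂ)

lemma hswap (x y : V) : ι ℂ x * ι ℂ y = -(ι ℂ y * ι ℂ x) :=
  eq_neg_of_add_eq_zero_left (ExteriorAlgebra.ι_add_mul_swap x y)

lemma wcyc1 (x y z : V) : ι ℂ z * (ι ℂ x * ι ℂ y) = ι ℂ x * ι ℂ y * ι ℂ z := by
  rw [← mul_assoc, hswap z x, neg_mul, mul_assoc, hswap z y, mul_neg, neg_neg, ← mul_assoc]

lemma wcyc2 (x y z : V) : ι ℂ y * (ι ℂ z * ι ℂ x) = ι ℂ x * ι ℂ y * ι ℂ z := by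
  rw [wcyc1 z x y, mul_assoc, wcyc1 x y z]

lemma wswap12 (x y z : V) : ι ℂ y * (ι ℂ x * ι ℂ z) = -(ι ℂ x * ι ℂ y * ι ℂ z) := by
  rw [← mul_assoc, hswap y x, neg_mul]

lemma wswap23 (x y z : V) : ι ℂ x * (ι ℂ z * ι ℂ y) = -(ι ℂ x * ι ℂ y * ι ℂ z) := by
  rw [hswap z y, mul_neg, mul_assoc]

/-- Diagonal scaling automorphism: multiplies the `k`-th coordinate by `t`. -/
noncomputable def gd (k : Fin 6) (t : ℂ) (ht : t ≠ 0) : V ≃ₗ[ℂ] V :=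
  LinearEquiv.ofLinear
    (Matrix.diagonal (fun j => if j = k then t else 1)).mulVecLin
    (Matrix.diagonal (fun j => if j = k then t⁻¹ else 1)).mulVecLin
    (by
      rw [← Matrix.mulVecLin_mul, Matrix.diagonal_mul_diagonal]
      have h : (fun j => (if j = k then t else 1) * (if j = k then t⁻¹ else 1)) =
          fun _ : Fin 6 => (1 : ℂ) := by
        funext j; split <;> simp [mul_inv_cancel₀ ht]
      rw [h, Matrix.diagonal_one, Matrix.mulVecLin_one])
    (by
      rw [← Matrix.mulVecLin_mul, Matrix.diagonal_mul_diagonal]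
      have h : (fun j => (if j = k then t⁻¹ else 1) * (if j = k then t else 1)) =
          fun _ : Fin 6 => (1 : ℂ) := by
        funext j; split <;> simp [inv_mul_cancel₀ ht]
      rw [h, Matrix.diagonal_one, Matrix.mulVecLin_one])

lemma gd_apply (k : Fin 6) (t : ℂ) (ht : t ≠ 0) (j : Fin 6) :
    (gd k t ht).toLinearMap (stdVec j) = (if j = k then t else 1) • stdVec j := by
  show (Matrix.diagonal (fun j => if j = k then t else 1)).mulVecLin (stdVec j) = _
  funext i
  simp only [Matrix.mulVecLin_apply, Matrix.mulVec_diagonal, stdVec, Pi.smul_apply,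
    Pi.single_apply, smul_eq_mul]
  by_cases h : i = j <;> by_cases h' : j = k <;> simp_all

lemma key1 (t : ℂ) (ht : t ≠ 0) :
    ExteriorAlgebra.map (gd 3 t ht).toLinearMap (wedge3 0 1 2 + wedge3 0 3 4) =
      wedge3 0 1 2 + t • wedge3 0 3 4 := by
  simp [wedge3, ExteriorAlgebra.map_apply_ι, gd_apply, smul_mul_assoc, mul_smul_comm]

lemma key2 (t : ℂ) (ht : t ≠ 0) :
    ExteriorAlgebra.map (gd 5 t ht).toLinearMap
        (wedge3 0 1 2 + wedge3 0 3 4 + wedge3 1 3 5) =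
      wedge3 0 1 2 + wedge3 0 3 4 + t • wedge3 1 3 5 := by
  simp [wedge3, ExteriorAlgebra.map_apply_ι, gd_apply, smul_mul_assoc, mul_smul_comm]

/-- The degenerating family of automorphisms carrying `e₁₂₃ + e₄₅₆` close to
`e₁₂₃ + e₁₄₅ + e₂₄₆`. -/
noncomputable def M3 (t : ℂ) : Matrix (Fin 6) (Fin 6) ℂ :=
  !![0, 1, 0, 0, 1, 0;
     0, 0, 1, 0, 0, 1;
     2⁻¹, 0, 0, 2⁻¹, 0, 0;
     (2*t)⁻¹, 0, 0, -(2*t)⁻¹, 0, 0;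
     0, 0, -t, 0, 0, t;
     0, t, 0, 0, -t, 0]

noncomputable def N3 (t : ℂ) : Matrix (Fin 6) (Fin 6) ℂ :=
  !![0, 0, 1, t, 0, 0;
     2⁻¹, 0, 0, 0, 0, (2*t)⁻¹;
     0, 2⁻¹, 0, 0, -(2*t)⁻¹, 0;
     0, 0, 1, -t, 0, 0;
     2⁻¹, 0, 0, 0, 0, -(2*t)⁻¹;
     0, 2⁻¹, 0, 0, (2*t)⁻¹, 0]

set_option maxHeartbeats 1000000 in
lemma M3_mul_N3 (t : ℂ) (ht : t ≠ 0) : M3 t * N3 t = 1 := by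
  ext i j
  fin_cases i <;> fin_cases j <;>
    simp only [M3, N3, Matrix.mul_apply, Fin.sum_univ_six, Matrix.one_apply, Matrix.of_apply,
      ev6_0, evm6_0, ev6_1, evm6_1, ev6_2, evm6_2, ev6_3, evm6_3, ev6_4, evm6_4, ev6_5, evm6_5, ev5_0, evm5_0, ev5_1, evm5_1, ev5_2, evm5_2, ev5_3, evm5_3, ev5_4, evm5_4, ev4_0, evm4_0, ev4_1, evm4_1, ev4_2, evm4_2, ev4_3, evm4_3, ev3_0, evm3_0, ev3_1, evm3_1, ev3_2, evm3_2, ev2_0, evm2_0, ev2_1, evm2_1, ev1_0, evm1_0, Fin.ext_iff, Fin.val_zero] <;>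
    norm_num <;> field_simp <;> try ring

set_option maxHeartbeats 1000000 in
lemma N3_mul_M3 (t : ℂ) (ht : t ≠ 0) : N3 t * M3 t = 1 := by
  ext i j
  fin_cases i <;> fin_cases j <;>
    simp only [M3, N3, Matrix.mul_apply, Fin.sum_univ_six, Matrix.one_apply, Matrix.of_apply,
      ev6_0, evm6_0, ev6_1, evm6_1, ev6_2, evm6_2, ev6_3, evm6_3, ev6_4, evm6_4, ev6_5, evm6_5, ev5_0, evm5_0, ev5_1, evm5_1, ev5_2, evm5_2, ev5_3, evm5_3, ev5_4, evm5_4, ev4_0, evm4_0, ev4_1, evm4_1, ev4_2, evm4_2, ev4_3, evm4_3, ev3_0, evm3_0, ev3_1, evm3_1, ev3_2, evm3_2, ev2_0, evm2_0, ev2_1, evm2_1, ev1_0, evm1_0, Fin.ext_iff, Fin.val_zero] <;>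
    norm_num <;> field_simp <;> try ring

noncomputable def g3 (t : ℂ) (ht : t ≠ 0) : V ≃ₗ[ℂ] V :=
  LinearEquiv.ofLinear (M3 t).mulVecLin (N3 t).mulVecLin
    (by rw [← Matrix.mulVecLin_mul, M3_mul_N3 t ht, Matrix.mulVecLin_one])
    (by rw [← Matrix.mulVecLin_mul, N3_mul_M3 t ht, Matrix.mulVecLin_one])

lemma g3_col0 (t : ℂ) (ht : t ≠ 0) :
    (g3 t ht).toLinearMap (stdVec 0) = (2*t)⁻¹ • stdVec 3 + (2:ℂ)⁻¹ • stdVec 2 := by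
  show (M3 t).mulVecLin (stdVec 0) = _
  funext i
  fin_cases i <;>
    simp (config := { decide := true }) [M3, Matrix.mulVecLin_apply, Matrix.mulVec,
      dotProduct, Fin.sum_univ_six,
      stdVec, Pi.single_apply, ev6_0, evm6_0, ev6_1, evm6_1, ev6_2, evm6_2, ev6_3, evm6_3, ev6_4, evm6_4, ev6_5, evm6_5, ev5_0, evm5_0, ev5_1, evm5_1, ev5_2, evm5_2, ev5_3, evm5_3, ev5_4, evm5_4, ev4_0, evm4_0, ev4_1, evm4_1, ev4_2, evm4_2, ev4_3, evm4_3, ev3_0, evm3_0, ev3_1, evm3_1, ev3_2, evm3_2, ev2_0, evm2_0, ev2_1, evm2_1, ev1_0, evm1_0]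

lemma g3_col1 (t : ℂ) (ht : t ≠ 0) :
    (g3 t ht).toLinearMap (stdVec 1) = stdVec 0 + t • stdVec 5 := by
  show (M3 t).mulVecLin (stdVec 1) = _
  funext i
  fin_cases i <;>
    simp (config := { decide := true }) [M3, Matrix.mulVecLin_apply, Matrix.mulVec,
      dotProduct, Fin.sum_univ_six,
      stdVec, Pi.single_apply, ev6_0, evm6_0, ev6_1, evm6_1, ev6_2, evm6_2, ev6_3, evm6_3, ev6_4, evm6_4, ev6_5, evm6_5, ev5_0, evm5_0, ev5_1, evm5_1, ev5_2, evm5_2, ev5_3, evm5_3, ev5_4, evm5_4, ev4_0, evm4_0, ev4_1, evm4_1, ev4_2, evm4_2, ev4_3, evm4_3, ev3_0, evm3_0, ev3_1, evm3_1, ev3_2, evm3_2, ev2_0, evm2_0, ev2_1, evm2_1, ev1_0, evm1_0]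

lemma g3_col2 (t : ℂ) (ht : t ≠ 0) :
    (g3 t ht).toLinearMap (stdVec 2) = stdVec 1 + (-t) • stdVec 4 := by
  show (M3 t).mulVecLin (stdVec 2) = _
  funext i
  fin_cases i <;>
    simp (config := { decide := true }) [M3, Matrix.mulVecLin_apply, Matrix.mulVec,
      dotProduct, Fin.sum_univ_six,
      stdVec, Pi.single_apply, ev6_0, evm6_0, ev6_1, evm6_1, ev6_2, evm6_2, ev6_3, evm6_3, ev6_4, evm6_4, ev6_5, evm6_5, ev5_0, evm5_0, ev5_1, evm5_1, ev5_2, evm5_2, ev5_3, evm5_3, ev5_4, evm5_4, ev4_0, evm4_0, ev4_1, evm4_1, ev4_2, evm4_2, ev4_3, evm4_3, ev3_0, evm3_0, ev3_1, evm3_1, ev3_2, evm3_2, ev2_0, evm2_0, ev2_1, evm2_1, ev1_0, evm1_0]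

lemma g3_col3 (t : ℂ) (ht : t ≠ 0) :
    (g3 t ht).toLinearMap (stdVec 3) = (-(2*t)⁻¹) • stdVec 3 + (2:ℂ)⁻¹ • stdVec 2 := by
  show (M3 t).mulVecLin (stdVec 3) = _
  funext i
  fin_cases i <;>
    simp (config := { decide := true }) [M3, Matrix.mulVecLin_apply, Matrix.mulVec,
      dotProduct, Fin.sum_univ_six,
      stdVec, Pi.single_apply, ev6_0, evm6_0, ev6_1, evm6_1, ev6_2, evm6_2, ev6_3, evm6_3, ev6_4, evm6_4, ev6_5, evm6_5, ev5_0, evm5_0, ev5_1, evm5_1, ev5_2, evm5_2, ev5_3, evm5_3, ev5_4, evm5_4, ev4_0, evm4_0, ev4_1, evm4_1, ev4_2, evm4_2, ev4_3, evm4_3, ev3_0, evm3_0, ev3_1, evm3_1, ev3_2, evm3_2, ev2_0, evm2_0, ev2_1, evm2_1, ev1_0, evm1_0]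

lemma g3_col4 (t : ℂ) (ht : t ≠ 0) :
    (g3 t ht).toLinearMap (stdVec 4) = stdVec 0 + (-t) • stdVec 5 := by
  show (M3 t).mulVecLin (stdVec 4) = _
  funext i
  fin_cases i <;>
    simp (config := { decide := true }) [M3, Matrix.mulVecLin_apply, Matrix.mulVec,
      dotProduct, Fin.sum_univ_six,
      stdVec, Pi.single_apply, ev6_0, evm6_0, ev6_1, evm6_1, ev6_2, evm6_2, ev6_3, evm6_3, ev6_4, evm6_4, ev6_5, evm6_5, ev5_0, evm5_0, ev5_1, evm5_1, ev5_2, evm5_2, ev5_3, evm5_3, ev5_4, evm5_4, ev4_0, evm4_0, ev4_1, evm4_1, ev4_2, evm4_2, ev4_3, evm4_3, ev3_0, evm3_0, ev3_1, evm3_1, ev3_2, evm3_2, ev2_0, evm2_0, ev2_1, evm2_1, ev1_0, evm1_0]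

lemma g3_col5 (t : ℂ) (ht : t ≠ 0) :
    (g3 t ht).toLinearMap (stdVec 5) = stdVec 1 + t • stdVec 4 := by
  show (M3 t).mulVecLin (stdVec 5) = _
  funext i
  fin_cases i <;>
    simp (config := { decide := true }) [M3, Matrix.mulVecLin_apply, Matrix.mulVec,
      dotProduct, Fin.sum_univ_six,
      stdVec, Pi.single_apply, ev6_0, evm6_0, ev6_1, evm6_1, ev6_2, evm6_2, ev6_3, evm6_3, ev6_4, evm6_4, ev6_5, evm6_5, ev5_0, evm5_0, ev5_1, evm5_1, ev5_2, evm5_2, ev5_3, evm5_3, ev5_4, evm5_4, ev4_0, evm4_0, ev4_1, evm4_1, ev4_2, evm4_2, ev4_3, evm4_3, ev3_0, evm3_0, ev3_1, evm3_1, ev3_2, evm3_2, ev2_0, evm2_0, ev2_1, evm2_1, ev1_0, evm1_0]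

lemma mid (t : ℂ) (ht : t ≠ 0) (A B C D E' G : E) :
    ((2*t)⁻¹ • A + (2:ℂ)⁻¹ • B) * (C + t • D) * (E' + (-t) • G) +
      ((-(2*t)⁻¹) • A + (2:ℂ)⁻¹ • B) * (C + (-t) • D) * (E' + t • G) =
    B * (C * E') + A * (D * E') - A * (C * G) - t ^ 2 • (B * (D * G)) := by
  simp only [add_mul, mul_add, smul_mul_assoc, mul_smul_comm, smul_add, smul_smul, mul_assoc]
  match_scalars <;> field_simp <;> ring

lemma key3 (t : ℂ) (ht : t ≠ 0) :
    ExteriorAlgebra.map (g3 t ht).toLinearMap (wedge3 0 1 2 + wedge3 3 4 5) =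
      wedge3 0 1 2 + wedge3 0 3 4 + wedge3 1 3 5 + t ^ 2 • wedge3 2 4 5 := by
  have h0 := g3_col0 t ht
  have h1 := g3_col1 t ht
  have h2 := g3_col2 t ht
  have h3 := g3_col3 t ht
  have h4 := g3_col4 t ht
  have h5 := g3_col5 t ht
  simp only [wedge3, map_add, map_mul, ExteriorAlgebra.map_apply_ι, h0, h1, h2, h3, h4, h5,
    map_smul, LinearMap.map_add]
  rw [mid t ht, wcyc1 (stdVec 0) (stdVec 1) (stdVec 2), wcyc2 (stdVec 1) (stdVec 3) (stdVec 5),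
    wswap12 (stdVec 0) (stdVec 3) (stdVec 4), wswap23 (stdVec 2) (stdVec 4) (stdVec 5)]
  module

/-- Continuity/limit lemma in the weak topology. -/
lemma tendsto_aff (φ : ℂ → ℂ) (hφ : Continuous φ) (h0 : φ 0 = 0) (c w : E) :
    Filter.Tendsto (fun t : ℂ => c + φ t • w) (nhdsWithin 0 {0}ᶜ) (nhds c) := by
  have hcont : Continuous (fun t : ℂ => c + φ t • w) := by
    refine continuous_iInf_rng.mpr fun f => continuous_induced_rng.mpr ?_
    have hfe : (f ∘ fun t : ℂ => c + φ t • w) = fun t : ℂ => f c + φ t * f w := by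
      funext s; simp [map_add, map_smul, smul_eq_mul]
    rw [hfe]
    exact continuous_const.add (hφ.mul continuous_const)
  have h := hcont.tendsto 0
  simp only [h0, zero_smul, add_zero] at h
  exact h.mono_left nhdsWithin_le_nhds

end TrivectorAux

open TrivectorAux in
/-- The orbit closures of the five trivector normal forms form a chain:
`e₁₂₃` lies in the closure of the `GL₆`-orbit of `e₁₂₃ + e₁₄₅`; `e₁₂₃ + e₁₄₅` lies in the
closure of the `GL₆`-orbit of `e₁₂₃ + e₁₄₅ + e₂₄₆`; and `e₁₂₃ + e₁₄₅ + e₂₄₆` lies in the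
closure of the `GL₆`-orbit of `e₁₂₃ + e₄₅₆` (standard topology on `⋀³ℂ⁶`). -/
theorem trivector_orbit_closure_chain :
    wedge3 0 1 2 ∈
      closure {w : ExteriorAlgebra ℂ (Fin 6 → ℂ) |
        GLEquiv3 (wedge3 0 1 2 + wedge3 0 3 4) w} ∧
    wedge3 0 1 2 + wedge3 0 3 4 ∈
      closure {w : ExteriorAlgebra ℂ (Fin 6 → ℂ) |
        GLEquiv3 (wedge3 0 1 2 + wedge3 0 3 4 + wedge3 1 3 5) w} ∧
    wedge3 0 1 2 + wedge3 0 3 4 + wedge3 1 3 5 ∈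
      closure {w : ExteriorAlgebra ℂ (Fin 6 → ℂ) |
        GLEquiv3 (wedge3 0 1 2 + wedge3 3 4 5) w} := by
  refine ⟨?_, ?_, ?_⟩
  · refine mem_closure_of_tendsto
      (tendsto_aff (fun t => t) continuous_id rfl (wedge3 0 1 2) (wedge3 0 3 4)) ?_
    filter_upwards [self_mem_nhdsWithin] with t ht
    exact ⟨gd 3 t ht, key1 t ht⟩
  · refine mem_closure_of_tendsto
      (tendsto_aff (fun t => t) continuous_id rfl (wedge3 0 1 2 + wedge3 0 3 4)
        (wedge3 1 3 5)) ?_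
    filter_upwards [self_mem_nhdsWithin] with t ht
    exact ⟨gd 5 t ht, by rw [key2 t ht, add_assoc]⟩
  · refine mem_closure_of_tendsto
      (tendsto_aff (fun t => t ^ 2) (by fun_prop) (by norm_num)
        (wedge3 0 1 2 + wedge3 0 3 4 + wedge3 1 3 5) (wedge3 2 4 5)) ?_
    filter_upwards [self_mem_nhdsWithin] with t ht
    exact ⟨g3 t ht, key3 t ht⟩
end

section
/- The pair (E₁₁+E₂₃, E₂₂) of 3×3 complex matrices (the representative of the orbit O₉ of (E₆,α₄)) lies in the closure (standard topology) of the GL₂(ℂ)×GL₃(ℂ)×GL₃(ℂ)-orbit of the pair (E₁₁+E₂₃, E₂₂+E₁₃) (the representative of the orbit O₁₁). This is the adjacency between orbits 9 and 11 in the degeneration order, which is missing in Parfenov's table. -/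
open Matrix

/-- The 3×3 complex matrix unit `E_{ij}`. -/
def Emat (i j : Fin 3) : Matrix (Fin 3) (Fin 3) ℂ := single i j 1

/-- Two pairs of 3×3 complex matrices are equivalent under `GL₂(ℂ) × GL₃(ℂ) × GL₃(ℂ)`,
acting by `((a b; c d), P, Q) · (A, B) = (P(aA+bB)Qᵀ, P(cA+dB)Qᵀ)`. -/
def TEquiv (p q : Matrix (Fin 3) (Fin 3) ℂ × Matrix (Fin 3) (Fin 3) ℂ) : Prop :=
  ∃ (g : GL (Fin 2) ℂ) (P Q : GL (Fin 3) ℂ),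
    q.1 = P.val * (g.val 0 0 • p.1 + g.val 0 1 • p.2) * Q.valᵀ ∧
    q.2 = P.val * (g.val 1 0 • p.1 + g.val 1 1 • p.2) * Q.valᵀ

/-- The eighteen normal forms of pairs of 3×3 complex matrices under
`GL₂(ℂ) × GL₃(ℂ) × GL₃(ℂ)` (the orbit representatives of `(E₆, α₄)`). -/
def tensorForms : Fin 18 → Matrix (Fin 3) (Fin 3) ℂ × Matrix (Fin 3) (Fin 3) ℂ :=
  ![(0, 0),
    (Emat 0 0, 0),
    (Emat 0 0, Emat 1 0),
    (Emat 0 0, Emat 0 1),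
    (Emat 0 0 + Emat 1 1, 0),
    (Emat 0 0 + Emat 1 1, Emat 0 1),
    (Emat 0 0 + Emat 1 1 + Emat 2 2, 0),
    (Emat 0 0, Emat 1 1),
    (Emat 0 0 + Emat 2 1, Emat 1 1),
    (Emat 0 0 + Emat 1 2, Emat 1 1),
    (Emat 0 0 + Emat 2 1, Emat 1 1 + Emat 2 0),
    (Emat 0 0 + Emat 1 2, Emat 1 1 + Emat 0 2),
    (Emat 0 0 + Emat 1 2 + Emat 2 1, Emat 1 1),
    (Emat 0 0 + Emat 1 2, Emat 1 1 + Emat 2 0),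
    (Emat 0 0 + Emat 2 2, Emat 1 1),
    (Emat 0 0 + Emat 1 2 + Emat 2 1, Emat 1 1 + Emat 2 0),
    (Emat 0 0 + Emat 2 2, Emat 1 1 + Emat 0 2),
    (Emat 0 0 + Emat 1 1 + Emat 2 2, Emat 0 0 - Emat 1 1)]

/-! Acting by the torus element `(diag(t,1,1), diag(t⁻¹,1,1))` fixes `E₁₁ + E₂₃` and `E₂₂`
and scales `E₁₃` by `t`, so `(E₁₁ + E₂₃, E₂₂ + t E₁₃)` lies in the orbit of `O₁₁` for `t ≠ 0`;
letting `t → 0` gives the pair of `O₉`. -/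

section Torus

variable {n R : Type*} [Fintype n] [DecidableEq n] [CommRing R]

def diagonalGL (d : n → Rˣ) : GL n R :=
  Units.map (diagonalRingHom n R : (n → R) →* Matrix n n R) (MulEquiv.piUnits.symm d)

@[simp]
lemma coe_diagonalGL (d : n → Rˣ) : (diagonalGL d : Matrix n n R) = diagonal fun i ↦ (d i : R) :=
  rfl

lemma diagonal_mul_single_mul_diagonal (d e : n → R) (i j : n) (c : R) :
    diagonal d * single i j c * diagonal e = single i j (d i * c * e j) := by
  ext a b
  simp only [mul_diagonal, diagonal_mul, single_apply]
  split_ifs with h <;> simp_all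

end Torus

lemma tEquiv_mul_mul_transpose (p : Matrix (Fin 3) (Fin 3) ℂ × Matrix (Fin 3) (Fin 3) ℂ)
    (P Q : GL (Fin 3) ℂ) :
    TEquiv p (P.val * p.1 * Q.valᵀ, P.val * p.2 * Q.valᵀ) :=
  ⟨1, P, Q, by simp, by simp⟩

/-- The pair `(E₁₁ + E₂₃, E₂₂)` (representative of the orbit `O₉` of `(E₆, α₄)`) lies in the
closure (standard topology) of the `GL₂(ℂ) × GL₃(ℂ) × GL₃(ℂ)`-orbit of
`(E₁₁ + E₂₃, E₂₂ + E₁₃)` (the representative of the orbit `O₁₁`): the adjacency between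
orbits 9 and 11 missing in Parfenov's table. -/
theorem orbit9_in_closure_orbit11 :
    ((Emat 0 0 + Emat 1 2, Emat 1 1) : Matrix (Fin 3) (Fin 3) ℂ × Matrix (Fin 3) (Fin 3) ℂ) ∈
      closure {q : Matrix (Fin 3) (Fin 3) ℂ × Matrix (Fin 3) (Fin 3) ℂ |
        TEquiv (Emat 0 0 + Emat 1 2, Emat 1 1 + Emat 0 2) q} := by
  let f (t : ℂ) : Matrix (Fin 3) (Fin 3) ℂ × Matrix (Fin 3) (Fin 3) ℂ :=
    (Emat 0 0 + Emat 1 2, Emat 1 1 + t • Emat 0 2)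
  have hf : Continuous f := by fun_prop
  have h_orbit (t : ℂ) (ht : t ≠ 0) : TEquiv (Emat 0 0 + Emat 1 2, Emat 1 1 + Emat 0 2) (f t) := by
    convert tEquiv_mul_mul_transpose _ (diagonalGL ![Units.mk0 t ht, 1, 1])
      (diagonalGL ![(Units.mk0 t ht)⁻¹, 1, 1]) using 2 <;>
    simp [Emat, ht, Matrix.mul_add, Matrix.add_mul, diagonal_mul_single_mul_diagonal]
  simpa [f] using mem_closure_of_tendsto ((hf.tendsto 0).mono_left nhdsWithin_le_nhds)
    (eventually_nhdsWithin_of_forall (s := {0}ᶜ) fun t ht ↦ h_orbit t ht)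
end

section
/- The orbit of the pair (I₃, diag(1,−1,0)) of 3×3 complex matrices under GL₂(ℂ)×GL₃(ℂ)×GL₃(ℂ) is dense in the space of all pairs of 3×3 complex matrices (with its standard topology); i.e. the generic orbit O₁₇ of (E₆,α₄) is open dense of dimension 18. -/
open Matrix

/-!
The discriminant `Δ(A, B)` of the binary cubic form `det (x A + y B)` is a relative invariant:
the action multiplies it by `det(g)⁶ (det P · det Q)⁴`, and `Δ(I₃, diag(1,−1,0)) = 4`.
Conversely, if `Δ(A, B) ≠ 0` the form does not vanish identically, so some member of the pencil
is invertible and `(A, B)` is equivalent to a pair `(I₃, M)`; then `M` has three distinct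
eigenvalues, hence is diagonalizable, and a Möbius transformation of the pencil moves its
eigenvalues to `1, −1, 0`. So the orbit is `{Δ ≠ 0}`, which is open because `Δ` is continuous,
and dense because `Δ` restricted to any line is a polynomial, not identically zero on a line
through the base point.
-/

namespace Cubic

section homogeneous

variable {R : Type*} [CommRing R]

def homEval (P : Cubic R) (x y : R) : R :=
  P.a * x ^ 3 + P.b * x ^ 2 * y + P.c * x * y ^ 2 + P.d * y ^ 3

def linearSubst (P : Cubic R) (α β γ δ : R) : Cubic R where
  a := P.homEval α β
  b := 3 * P.a * α ^ 2 * γ + P.b * (α ^ 2 * δ + 2 * α * β * γ) +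
    P.c * (2 * α * β * δ + β ^ 2 * γ) + 3 * P.d * β ^ 2 * δ
  c := 3 * P.a * α * γ ^ 2 + P.b * (2 * α * γ * δ + β * γ ^ 2) +
    P.c * (α * δ ^ 2 + 2 * β * γ * δ) + 3 * P.d * β * δ ^ 2
  d := P.homEval γ δ

theorem homEval_linearSubst (P : Cubic R) (α β γ δ x y : R) :
    (P.linearSubst α β γ δ).homEval x y = P.homEval (α * x + γ * y) (β * x + δ * y) := by
  simp only [homEval, linearSubst]
  ring

theorem discr_linearSubst (P : Cubic R) (α β γ δ : R) :
    (P.linearSubst α β γ δ).discr = (α * δ - β * γ) ^ 6 * P.discr := by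
  simp only [discr, linearSubst, homEval]
  ring

theorem discr_mul_left (κ : R) (P : Cubic R) :
    (⟨κ * P.a, κ * P.b, κ * P.c, κ * P.d⟩ : Cubic R).discr = κ ^ 4 * P.discr := by
  simp only [discr]
  ring

theorem map_discr {S : Type*} [CommRing S] (φ : R →+* S) (P : Cubic R) :
    φ P.discr = (P.map φ).discr := by
  simp [discr, map, map_ofNat]

end homogeneous

variable {K : Type*} [Field K]

theorem eq_of_homEval_eq [NeZero (2 : K)] {P Q : Cubic K}
    (h : ∀ x y, P.homEval x y = Q.homEval x y) : P = Q := by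
  have h10 := h 1 0
  have h01 := h 0 1
  have h11 := h 1 1
  have h1m := h 1 (-1)
  simp only [homEval] at h10 h01 h11 h1m
  have two : (2 : K) ≠ 0 := two_ne_zero
  ext
  · linear_combination h10
  · exact mul_left_cancel₀ two (by linear_combination h11 - h1m - 2 * h01)
  · exact mul_left_cancel₀ two (by linear_combination h11 + h1m - 2 * h10)
  · linear_combination h01

theorem exists_injective_homEval_eq_zero [IsAlgClosed K] {P : Cubic K} (ha : P.a ≠ 0)
    (hd : P.discr ≠ 0) : ∃ μ : Fin 3 → K, Function.Injective μ ∧ ∀ i, P.homEval (μ i) 1 = 0 := by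
  obtain ⟨x, y, z, h3⟩ :=
    (splits_iff_roots_eq_three (φ := RingHom.id K) ha).mp (IsAlgClosed.splits _)
  obtain ⟨hxy, hxz, hyz⟩ := (discr_ne_zero_iff_roots_ne ha h3).mp hd
  have hroots : P.roots = {x, y, z} := h3
  refine ⟨![x, y, z], ?_, fun i => ?_⟩
  · intro i j hij
    fin_cases i <;> fin_cases j <;> simp_all [eq_comm]
  · have hi : ![x, y, z] i ∈ P.roots := by
      rw [hroots]
      fin_cases i <;> simp
    rw [mem_roots_iff (ne_zero_of_a_ne_zero ha)] at hi
    simpa [homEval] using hi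

end Cubic

section pencil

variable {R : Type*} [CommRing R]

def pencilCubic (A B : Matrix (Fin 3) (Fin 3) R) : Cubic R :=
  ⟨A.det, ∑ i, (A.updateRow i (B i)).det, ∑ i, (B.updateRow i (A i)).det, B.det⟩

def pencilDiscr (A B : Matrix (Fin 3) (Fin 3) R) : R :=
  (pencilCubic A B).discr

theorem det_smul_add_smul (A B : Matrix (Fin 3) (Fin 3) R) (x y : R) :
    (x • A + y • B).det = (pencilCubic A B).homEval x y := by
  simp only [pencilCubic, Cubic.homEval, det_fin_three, Fin.sum_univ_three, updateRow_apply,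
    Fin.reduceEq, ↓reduceIte, Matrix.add_apply, Matrix.smul_apply, smul_eq_mul]
  ring

theorem pencilCubic_map {S : Type*} [CommRing S] (φ : R →+* S)
    (A B : Matrix (Fin 3) (Fin 3) R) :
    pencilCubic (A.map φ) (B.map φ) = (pencilCubic A B).map φ := by
  simp only [pencilCubic, Cubic.map, RingHom.map_det, RingHom.mapMatrix_apply, map_sum,
    map_updateRow]
  rfl

theorem map_pencilDiscr {S : Type*} [CommRing S] (φ : R →+* S)
    (A B : Matrix (Fin 3) (Fin 3) R) :
    φ (pencilDiscr A B) = pencilDiscr (A.map φ) (B.map φ) := by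
  rw [pencilDiscr, pencilDiscr, pencilCubic_map, Cubic.map_discr]

theorem pencilDiscr_one_diagonal :
    pencilDiscr (1 : Matrix (Fin 3) (Fin 3) R) (diagonal ![1, -1, 0]) = 4 := by
  have hcubic : pencilCubic (1 : Matrix (Fin 3) (Fin 3) R) (diagonal ![1, -1, 0]) =
      ⟨1, 0, -1, 0⟩ := by
    ext <;> simp [pencilCubic, det_fin_three, Fin.sum_univ_three, updateRow_apply, one_apply,
      Fin.prod_univ_three]
  norm_num [pencilDiscr, hcubic, Cubic.discr]

theorem smul_sandwich_add_smul_sandwich {l m n o : Type*} [Fintype m] [Fintype n]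
    (P : Matrix l m R) (X Y : Matrix m n R) (Q : Matrix n o R) (x y : R) :
    x • (P * X * Q) + y • (P * Y * Q) = P * (x • X + y • Y) * Q := by
  simp only [Matrix.mul_add, Matrix.add_mul, Matrix.mul_smul, Matrix.smul_mul]

theorem pencilDiscr_sandwich {K : Type*} [Field K] [NeZero (2 : K)]
    (P Q A B : Matrix (Fin 3) (Fin 3) K) (a b c d : K) :
    pencilDiscr (P * (a • A + b • B) * Qᵀ) (P * (c • A + d • B) * Qᵀ) =
      (a * d - b * c) ^ 6 * (P.det * Q.det) ^ 4 * pencilDiscr A B := by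
  set C := (pencilCubic A B).linearSubst a b c d
  set κ := P.det * Q.det
  have hcubic : pencilCubic (P * (a • A + b • B) * Qᵀ) (P * (c • A + d • B) * Qᵀ) =
      ⟨κ * C.a, κ * C.b, κ * C.c, κ * C.d⟩ := by
    refine Cubic.eq_of_homEval_eq fun x y => ?_
    have hcomb : x • (a • A + b • B) + y • (c • A + d • B) =
        (a * x + c * y) • A + (b * x + d * y) • B := by
      module
    rw [← det_smul_add_smul, smul_sandwich_add_smul_sandwich, hcomb, det_mul, det_mul,
      det_transpose, det_smul_add_smul, ← Cubic.homEval_linearSubst]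
    simp only [Cubic.homEval]
    ring
  rw [pencilDiscr, hcubic, Cubic.discr_mul_left, Cubic.discr_linearSubst, pencilDiscr]
  ring

end pencil

abbrev PencilGroup (R : Type*) [CommRing R] (m n : Type*) [Fintype m] [DecidableEq m]
    [Fintype n] [DecidableEq n] :=
  GL (Fin 2) R × GL m R × GL n R

namespace PencilGroup

variable {R : Type*} [CommRing R] {m n : Type*} [Fintype m] [DecidableEq m] [Fintype n]
  [DecidableEq n]

instance : SMul (PencilGroup R m n) (Matrix m n R × Matrix m n R) where
  smul x p := (x.2.1.val * (x.1.val 0 0 • p.1 + x.1.val 0 1 • p.2) * x.2.2.valᵀ,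
    x.2.1.val * (x.1.val 1 0 • p.1 + x.1.val 1 1 • p.2) * x.2.2.valᵀ)

theorem smul_def (x : PencilGroup R m n) (p : Matrix m n R × Matrix m n R) :
    x • p = (x.2.1.val * (x.1.val 0 0 • p.1 + x.1.val 0 1 • p.2) * x.2.2.valᵀ,
      x.2.1.val * (x.1.val 1 0 • p.1 + x.1.val 1 1 • p.2) * x.2.2.valᵀ) := rfl

instance : MulAction (PencilGroup R m n) (Matrix m n R × Matrix m n R) where
  one_smul p := by
    simp [smul_def, one_apply]
  mul_smul x y p := by
    simp only [smul_def, Prod.fst_mul, Prod.snd_mul, Units.val_mul, transpose_mul, mul_apply,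
      Fin.sum_univ_two, Matrix.mul_add, Matrix.add_mul, Matrix.mul_smul, Matrix.smul_mul,
      Matrix.mul_assoc, add_smul, mul_smul, Prod.mk.injEq]
    constructor <;> module

end PencilGroup

theorem smul_one_add_smul_diagonal {R n : Type*} [CommRing R] [DecidableEq n] (a b : R)
    (μ : n → R) : a • (1 : Matrix n n R) + b • diagonal μ = diagonal fun i => a + b * μ i := by
  rw [smul_one_eq_diagonal, ← diagonal_smul, diagonal_add]
  rfl

section orbit

open MulAction

variable {K : Type*} [Field K] {n : Type*} [Fintype n] [DecidableEq n]

theorem one_inv_mul_mem_orbit {A B : Matrix n n K} (hA : A.det ≠ 0) :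
    (1, A⁻¹ * B) ∈ orbit (PencilGroup K n n) (A, B) := by
  refine ⟨(1, GeneralLinearGroup.mkOfDetNeZero A⁻¹ (by simpa using hA), 1), ?_⟩
  simp [PencilGroup.smul_def, one_apply, nonsing_inv_mul _ (isUnit_iff_ne_zero.mpr hA)]

theorem exists_mul_eq_mul_diagonal {M : Matrix n n K} {μ : n → K} (hμ : Function.Injective μ)
    (h : ∀ i, (μ i • 1 - M).det = 0) :
    ∃ S : Matrix n n K, S.det ≠ 0 ∧ M * S = S * diagonal μ := by
  have hvec : ∀ i, ∃ v, v ≠ 0 ∧ M *ᵥ v = μ i • v := fun i => by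
    obtain ⟨v, hv, hMv⟩ := exists_mulVec_eq_zero_iff.mpr (h i)
    refine ⟨v, hv, ?_⟩
    rwa [sub_mulVec, smul_mulVec, one_mulVec, sub_eq_zero, eq_comm] at hMv
  choose v hv0 hMv using hvec
  have hind : LinearIndependent K v :=
    Module.End.eigenvectors_linearIndependent' (toLin' M) μ hμ v
      fun i => ⟨Module.End.mem_eigenspace_iff.mpr (by rw [toLin'_apply, hMv]), hv0 i⟩
  refine ⟨(of v)ᵀ, ?_, ?_⟩
  · rw [det_transpose, ← isUnit_iff_ne_zero, ← isUnit_iff_isUnit_det]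
    exact linearIndependent_rows_iff_isUnit.mp hind
  · ext i j
    have hij := congrFun (hMv j) i
    simp only [mulVec, dotProduct, Pi.smul_apply, smul_eq_mul] at hij
    rw [mul_diagonal, mul_apply]
    simpa [mul_comm] using hij

theorem one_diagonal_mem_orbit_of_mul_eq {M S : Matrix n n K} {μ : n → K} (hS : S.det ≠ 0)
    (hMS : M * S = S * diagonal μ) :
    ((1 : Matrix n n K), diagonal μ) ∈ orbit (PencilGroup K n n) (1, M) := by
  have hSu : IsUnit S.det := isUnit_iff_ne_zero.mpr hS
  refine ⟨(1, GeneralLinearGroup.mkOfDetNeZero S⁻¹ (by simpa using hS),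
    GeneralLinearGroup.mkOfDetNeZero Sᵀ (by simpa using hS)), ?_⟩
  simp [PencilGroup.smul_def, one_apply, Matrix.mul_assoc, hMS, nonsing_inv_mul _ hSu,
    nonsing_inv_mul_cancel_left _ _ hSu]

theorem one_diagonal_moebius_mem_orbit {μ : n → K} {a b c d : K} (hdet : a * d - b * c ≠ 0)
    (hμ : ∀ i, a + b * μ i ≠ 0) :
    ((1 : Matrix n n K), diagonal fun i => (c + d * μ i) / (a + b * μ i)) ∈
      orbit (PencilGroup K n n) (1, diagonal μ) := by
  refine ⟨(GeneralLinearGroup.mkOfDetNeZero !![a, b; c, d] (by simpa [det_fin_two] using hdet),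
    GeneralLinearGroup.mkOfDetNeZero (diagonal fun i => (a + b * μ i)⁻¹) ?_, 1), ?_⟩
  · simp [det_diagonal, Finset.prod_ne_zero_iff, hμ]
  · simp [PencilGroup.smul_def, smul_one_add_smul_diagonal, diagonal_mul_diagonal,
      inv_mul_cancel₀ (hμ _), div_eq_inv_mul]

theorem exists_GL_two_row_zero_eq {x y : K} (h : x ≠ 0 ∨ y ≠ 0) :
    ∃ g : GL (Fin 2) K, g.val 0 0 = x ∧ g.val 0 1 = y := by
  rcases h with hx | hy
  · exact ⟨GeneralLinearGroup.mkOfDetNeZero !![x, y; 0, 1] (by simpa [det_fin_two] using hx),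
      rfl, rfl⟩
  · exact ⟨GeneralLinearGroup.mkOfDetNeZero !![x, y; 1, 0] (by simpa [det_fin_two] using hy),
      rfl, rfl⟩

theorem exists_injective_det_smul_one_sub_eq_zero [IsAlgClosed K]
    {M : Matrix (Fin 3) (Fin 3) K} (hM : pencilDiscr 1 M ≠ 0) :
    ∃ μ : Fin 3 → K, Function.Injective μ ∧ ∀ i, (μ i • 1 - M).det = 0 := by
  set χ := (pencilCubic 1 M).linearSubst 1 0 0 (-1)
  have hχ : ∀ t, χ.homEval t 1 = (t • 1 - M).det := fun t => by
    rw [Cubic.homEval_linearSubst, ← det_smul_add_smul]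
    congr 1
    module
  have ha : χ.a = 1 := by
    change (pencilCubic 1 M).homEval 1 0 = 1
    simp [← det_smul_add_smul]
  have hd : χ.discr ≠ 0 := by
    simpa [χ, Cubic.discr_linearSubst, pencilDiscr] using hM
  obtain ⟨μ, hμ, hroot⟩ := Cubic.exists_injective_homEval_eq_zero (ha ▸ one_ne_zero) hd
  exact ⟨μ, hμ, fun i => hχ (μ i) ▸ hroot i⟩

variable [NeZero (2 : K)]

theorem pencilDiscr_smul (x : PencilGroup K (Fin 3) (Fin 3))
    (p : Matrix (Fin 3) (Fin 3) K × Matrix (Fin 3) (Fin 3) K) :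
    pencilDiscr (x • p).1 (x • p).2 =
      x.1.val.det ^ 6 * (x.2.1.val.det * x.2.2.val.det) ^ 4 * pencilDiscr p.1 p.2 := by
  rw [PencilGroup.smul_def, pencilDiscr_sandwich, det_fin_two]

theorem pencilDiscr_ne_zero_iff_of_mem_orbit
    {p q : Matrix (Fin 3) (Fin 3) K × Matrix (Fin 3) (Fin 3) K}
    (h : q ∈ orbit (PencilGroup K (Fin 3) (Fin 3)) p) :
    pencilDiscr q.1 q.2 ≠ 0 ↔ pencilDiscr p.1 p.2 ≠ 0 := by
  obtain ⟨x, rfl⟩ := h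
  simp [pencilDiscr_smul, GeneralLinearGroup.det_ne_zero]

theorem exists_det_ne_zero_of_pencilDiscr_ne_zero {A B : Matrix (Fin 3) (Fin 3) K}
    (h : pencilDiscr A B ≠ 0) : ∃ g : GL (Fin 2) K, (g.val 0 0 • A + g.val 0 1 • B).det ≠ 0 := by
  by_contra! hg
  have hzero : pencilCubic A B = ⟨0, 0, 0, 0⟩ := Cubic.eq_of_homEval_eq fun x y => by
    by_cases hxy : x = 0 ∧ y = 0
    · simp [hxy.1, hxy.2, Cubic.homEval]
    obtain ⟨g, rfl, rfl⟩ := exists_GL_two_row_zero_eq (not_and_or.mp hxy)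
    rw [← det_smul_add_smul, hg g]
    simp [Cubic.homEval]
  apply h
  simp [pencilDiscr, hzero, Cubic.discr]

theorem exists_one_mem_orbit_of_pencilDiscr_ne_zero {A B : Matrix (Fin 3) (Fin 3) K}
    (h : pencilDiscr A B ≠ 0) :
    ∃ M, pencilDiscr 1 M ≠ 0 ∧ (1, M) ∈ orbit (PencilGroup K (Fin 3) (Fin 3)) (A, B) := by
  obtain ⟨g, hg⟩ := exists_det_ne_zero_of_pencilDiscr_ne_zero h
  set p := ((g, 1, 1) : PencilGroup K (Fin 3) (Fin 3)) • (A, B)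
  have hp1 : p.1.det ≠ 0 := by simpa [p, PencilGroup.smul_def] using hg
  have hmem := one_inv_mul_mem_orbit (B := p.2) hp1
  rw [orbit_eq_iff.mpr (mem_orbit (A, B) _)] at hmem
  exact ⟨_, (pencilDiscr_ne_zero_iff_of_mem_orbit hmem).mpr h, hmem⟩

theorem one_diagonal_one_neg_one_zero_mem_orbit {μ : Fin 3 → K} (hμ : Function.Injective μ) :
    ((1 : Matrix (Fin 3) (Fin 3) K), diagonal ![1, -1, 0]) ∈
      orbit (PencilGroup K (Fin 3) (Fin 3)) (1, diagonal μ) := by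
  have h01 : μ 0 - μ 1 ≠ 0 := sub_ne_zero.mpr (hμ.ne (by decide))
  have h02 : μ 0 - μ 2 ≠ 0 := sub_ne_zero.mpr (hμ.ne (by decide))
  have h12 : μ 1 - μ 2 ≠ 0 := sub_ne_zero.mpr (hμ.ne (by decide))
  have two : (2 : K) ≠ 0 := two_ne_zero
  -- the Möbius transformation `t ↦ (c + d t) / (a + b t)` sends `μ 0, μ 1, μ 2` to `1, -1, 0`
  set a := μ 0 * μ 2 - 2 * μ 0 * μ 1 + μ 1 * μ 2
  set b := μ 0 + μ 1 - 2 * μ 2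
  set c := -(μ 0 - μ 1) * μ 2
  set d := μ 0 - μ 1
  have hμ0 : a + b * μ 0 = (μ 0 - μ 1) * (μ 0 - μ 2) := by ring
  have hμ1 : a + b * μ 1 = -((μ 0 - μ 1) * (μ 1 - μ 2)) := by ring
  have hμ2 : a + b * μ 2 = -(2 * (μ 0 - μ 2) * (μ 1 - μ 2)) := by ring
  have hdet : a * d - b * c = -(2 * (μ 0 - μ 1) * (μ 0 - μ 2) * (μ 1 - μ 2)) := by ring
  have hval : (fun i => (c + d * μ i) / (a + b * μ i)) = ![1, -1, 0] := by
    funext i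
    fin_cases i
    · change (c + d * μ 0) / (a + b * μ 0) = 1
      rw [hμ0, div_eq_one_iff_eq (mul_ne_zero h01 h02)]
      ring
    · change (c + d * μ 1) / (a + b * μ 1) = -1
      rw [hμ1, div_eq_iff (neg_ne_zero.mpr (mul_ne_zero h01 h12))]
      ring
    · change (c + d * μ 2) / (a + b * μ 2) = 0
      rw [show c + d * μ 2 = 0 by ring, zero_div]
  have hden : ∀ i, a + b * μ i ≠ 0 := fun i => by
    fin_cases i
    · exact hμ0 ▸ mul_ne_zero h01 h02
    · exact hμ1 ▸ neg_ne_zero.mpr (mul_ne_zero h01 h12)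
    · exact hμ2 ▸ neg_ne_zero.mpr (mul_ne_zero (mul_ne_zero two h02) h12)
  have hmoeb := one_diagonal_moebius_mem_orbit (c := c) (d := d)
    (by rw [hdet]; exact neg_ne_zero.mpr (mul_ne_zero (mul_ne_zero (mul_ne_zero two h01) h02) h12))
    hden
  rwa [hval] at hmoeb

theorem one_diagonal_one_neg_one_zero_mem_orbit_of_pencilDiscr_ne_zero [IsAlgClosed K]
    {A B : Matrix (Fin 3) (Fin 3) K} (h : pencilDiscr A B ≠ 0) :
    ((1 : Matrix (Fin 3) (Fin 3) K), diagonal ![1, -1, 0]) ∈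
      orbit (PencilGroup K (Fin 3) (Fin 3)) (A, B) := by
  obtain ⟨M, hM, hAB⟩ := exists_one_mem_orbit_of_pencilDiscr_ne_zero h
  obtain ⟨μ, hμ, hroot⟩ := exists_injective_det_smul_one_sub_eq_zero hM
  obtain ⟨S, hS, hMS⟩ := exists_mul_eq_mul_diagonal hμ hroot
  have hdiag := one_diagonal_mem_orbit_of_mul_eq hS hMS
  rw [orbit_eq_iff.mpr hAB] at hdiag
  have hbase := one_diagonal_one_neg_one_zero_mem_orbit hμ
  rwa [orbit_eq_iff.mpr hdiag] at hbase

theorem orbit_one_diagonal_one_neg_one_zero [IsAlgClosed K] :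
    orbit (PencilGroup K (Fin 3) (Fin 3)) ((1 : Matrix (Fin 3) (Fin 3) K), diagonal ![1, -1, 0]) =
      {p | pencilDiscr p.1 p.2 ≠ 0} := by
  ext p
  constructor
  · intro hp
    refine (pencilDiscr_ne_zero_iff_of_mem_orbit hp).mpr ?_
    rw [pencilDiscr_one_diagonal, show (4 : K) = 2 * 2 by norm_num]
    exact mul_ne_zero two_ne_zero two_ne_zero
  · exact fun hp =>
      mem_orbit_symm.mp (one_diagonal_one_neg_one_zero_mem_orbit_of_pencilDiscr_ne_zero hp)

end orbit

section topology

open Filter Topology Polynomial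

theorem continuous_pencilDiscr {R : Type*} [CommRing R] [TopologicalSpace R]
    [IsTopologicalRing R] :
    Continuous fun p : Matrix (Fin 3) (Fin 3) R × Matrix (Fin 3) (Fin 3) R =>
      pencilDiscr p.1 p.2 := by
  simp only [pencilDiscr, pencilCubic, Cubic.discr]
  fun_prop

theorem exists_polynomial_eval_eq_pencilDiscr {R : Type*} [CommRing R]
    (p v : Matrix (Fin 3) (Fin 3) R × Matrix (Fin 3) (Fin 3) R) :
    ∃ ψ : R[X], ∀ t, ψ.eval t = pencilDiscr (p + t • v).1 (p + t • v).2 := by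
  refine ⟨pencilDiscr (p.1.map C + (X : R[X]) • v.1.map C) (p.2.map C + (X : R[X]) • v.2.map C),
    fun t => ?_⟩
  have hline : ∀ N N' : Matrix (Fin 3) (Fin 3) R,
      (N.map C + (X : R[X]) • N'.map C).map (evalRingHom t) = N + t • N' := fun N N' => by
    ext i j
    simp only [coe_evalRingHom, map_apply, Matrix.add_apply, Matrix.smul_apply, smul_eq_mul,
      eval_add, eval_C, eval_mul, eval_X]
  rw [← coe_evalRingHom, map_pencilDiscr, hline, hline]
  rfl

theorem dense_setOf_ne_zero_of_polynomial_along_lines {𝕜 V : Type*} [NontriviallyNormedField 𝕜]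
    [AddCommGroup V] [Module 𝕜 V] [TopologicalSpace V] [ContinuousAdd V] [ContinuousSMul 𝕜 V]
    {f : V → 𝕜} (hline : ∀ p v, ∃ ψ : 𝕜[X], ∀ t, ψ.eval t = f (p + t • v)) {q : V}
    (hq : f q ≠ 0) : Dense {x | f x ≠ 0} := by
  intro p
  obtain ⟨ψ, hψ⟩ := hline p (q - p)
  have hψ0 : ψ ≠ 0 := fun h => hq (by simpa [h] using (hψ 1).symm)
  have hroots : ∀ᶠ t in 𝓝[≠] (0 : 𝕜), ¬ψ.IsRoot t :=
    nhdsNE_le_cofinite 0 (finite_setOfPred_isRoot hψ0).compl_mem_cofinite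
  have htend : Tendsto (fun t : 𝕜 => p + t • (q - p)) (𝓝[≠] 0) (𝓝 p) := by
    have hcont : Continuous fun t : 𝕜 => p + t • (q - p) := by fun_prop
    simpa using (hcont.tendsto 0).mono_left nhdsWithin_le_nhds
  refine mem_closure_of_tendsto htend (hroots.mono fun t ht => ?_)
  simpa [← hψ] using ht

end topology

theorem tEquiv_iff_mem_orbit {p q : Matrix (Fin 3) (Fin 3) ℂ × Matrix (Fin 3) (Fin 3) ℂ} :
    TEquiv p q ↔ q ∈ MulAction.orbit (PencilGroup ℂ (Fin 3) (Fin 3)) p := by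
  constructor
  · rintro ⟨g, P, Q, h1, h2⟩
    exact ⟨(g, P, Q), Prod.ext h1.symm h2.symm⟩
  · rintro ⟨⟨g, P, Q⟩, rfl⟩
    exact ⟨g, P, Q, rfl, rfl⟩

/-- The `GL₂(ℂ) × GL₃(ℂ) × GL₃(ℂ)`-orbit of the pair `(I₃, diag(1,−1,0))` is open and dense
in the space of all pairs of 3×3 complex matrices (with its standard topology): the generic
orbit `O₁₇` of `(E₆, α₄)` is open dense of dimension `18`. -/
theorem generic_tensor_pair_orbit_dense :
    Dense {q : Matrix (Fin 3) (Fin 3) ℂ × Matrix (Fin 3) (Fin 3) ℂ |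
        TEquiv (1, diagonal ![1, -1, 0]) q} ∧
    IsOpen {q : Matrix (Fin 3) (Fin 3) ℂ × Matrix (Fin 3) (Fin 3) ℂ |
        TEquiv (1, diagonal ![1, -1, 0]) q} ∧
    Module.finrank ℂ (Matrix (Fin 3) (Fin 3) ℂ × Matrix (Fin 3) (Fin 3) ℂ) = 18 := by
  have horbit : {q : Matrix (Fin 3) (Fin 3) ℂ × Matrix (Fin 3) (Fin 3) ℂ |
      TEquiv (1, diagonal ![1, -1, 0]) q} = {q | pencilDiscr q.1 q.2 ≠ 0} := by
    rw [← orbit_one_diagonal_one_neg_one_zero]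
    ext q
    exact tEquiv_iff_mem_orbit
  rw [horbit]
  refine ⟨dense_setOf_ne_zero_of_polynomial_along_lines exists_polynomial_eval_eq_pencilDiscr
      (q := (1, diagonal ![1, -1, 0])) (by norm_num [pencilDiscr_one_diagonal]),
    isOpen_ne_fun continuous_pencilDiscr continuous_const, ?_⟩
  simp [Module.finrank_prod, Module.finrank_matrix]
end
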